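/- arXiv:0811.0075 — 3 statements merged into one kernel-verified Lean document; each statement's English description precedes it below -/
import Mathlib

section
/- Fact 'R-down', second part: for every assignment I of small subsets as above (with no further assumptions), the first two versions of the coherence condition (R↓↓) are equivalent: (a) for all X ⊆ U, all A ∈ I(X) and all B ⊆ X with B ∉ F(X), A \ B ∈ I(X \ B); (b) for all X ⊆ U, all A ∈ F(X) and all B ⊆ X with B ∉ F(X), A \ B ∈ F(X \ B). -/
/-- The big subsets of `X` induced by a system `I` of small subsets:
`F(X) := {A ⊆ X : X \ A ∈ I(X)}`. -/
def bigSets {U : Type*} (I : Set U → Set (Set U)) (X : Set U) : Set (Set U) :=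
  {A | A ⊆ X ∧ X \ A ∈ I X}

/-! Within `X`, big sets are exactly the complements of small sets, and this duality commutes
with removing `B` from `X`: the complement of `(X \ A) \ B` in `X \ B` is `A \ B`. So (a) for `X \ A`
is (b) for `A`, and vice versa. -/

section

variable {U : Type*} {I : Set U → Set (Set U)} {X A B : Set U}

theorem Set.sdiff_sdiff_sdiff_sdiff_eq_sdiff (hA : A ⊆ X) : (X \ B) \ ((X \ A) \ B) = A \ B := by
  ext x
  constructor
  · rintro ⟨⟨hX, hB⟩, hXAB⟩
    exact ⟨by_contra fun hA' => hXAB ⟨⟨hX, hA'⟩, hB⟩, hB⟩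
  · rintro ⟨hA', hB⟩
    exact ⟨⟨hA hA', hB⟩, fun h => h.1.2 hA'⟩

theorem sdiff_mem_bigSets_iff (hA : A ⊆ X) : X \ A ∈ bigSets I X ↔ A ∈ I X := by
  simp only [bigSets, Set.mem_ofPred_eq, Set.sdiff_sdiff_cancel_left hA, Set.sdiff_subset, true_and]

theorem sdiff_sdiff_mem_bigSets_sdiff_iff (hA : A ⊆ X) :
    (X \ A) \ B ∈ bigSets I (X \ B) ↔ A \ B ∈ I (X \ B) := by
  simp only [bigSets, Set.mem_ofPred_eq, Set.sdiff_sdiff_sdiff_sdiff_eq_sdiff hA,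
    Set.sdiff_subset_sdiff_left Set.sdiff_subset, true_and]

end

/-- Fact "R-down", second part: the first two versions of the coherence condition
(R↓↓) are equivalent:
(a) for all `X ⊆ U`, all `A ∈ I(X)` and all `B ⊆ X` with `B ∉ F(X)`,
    `A \ B ∈ I(X \ B)`;
(b) for all `X ⊆ U`, all `A ∈ F(X)` and all `B ⊆ X` with `B ∉ F(X)`,
    `A \ B ∈ F(X \ B)`. -/
theorem rDownDown_versions_equiv {U : Type*} (I : Set U → Set (Set U))
    (hI : ∀ X A, A ∈ I X → A ⊆ X) :
    (∀ X A B : Set U, A ∈ I X → B ⊆ X → B ∉ bigSets I X → A \ B ∈ I (X \ B)) ↔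
    (∀ X A B : Set U, A ∈ bigSets I X → B ⊆ X → B ∉ bigSets I X →
      A \ B ∈ bigSets I (X \ B)) := by
  constructor
  · rintro h X A B ⟨hAX, hXA⟩ hB hBn
    have hsmall := h X (X \ A) B hXA hB hBn
    rwa [← sdiff_sdiff_mem_bigSets_sdiff_iff Set.sdiff_subset,
      Set.sdiff_sdiff_cancel_left hAX] at hsmall
  · intro h X A B hA hB hBn
    have hAX := hI X A hA
    exact (sdiff_sdiff_mem_bigSets_sdiff_iff hAX).1
      (h X (X \ A) B ((sdiff_mem_bigSets_iff hAX).2 hA) hB hBn)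
end

section
/- Fact 'R-down', third version of (R↓↓): if I satisfies (I↓), then the condition 'for all X ⊆ U, all A ∈ I(X) and all B ⊆ X with B ∉ F(X), A \ B ∈ I(X \ B)' is equivalent to transitivity of medium-or-large size: for all A, X, Y ⊆ U, if A ∈ M⁺(X) and X ∈ M⁺(Y), then A ∈ M⁺(Y). -/
/-- The subsets of `X` of at-least-medium size:
`M⁺(X) := {A ⊆ X : A ∉ I(X)}`. -/
def mediumPlusSets {U : Type*} (I : Set U → Set (Set U)) (X : Set U) : Set (Set U) :=
  {A | A ⊆ X ∧ A ∉ I X}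

/-- The third version of (R↓↓). -/
def RDownDown {U : Type*} (I : Set U → Set (Set U)) : Prop :=
  ∀ X A B : Set U, A ∈ I X → B ⊆ X → B ∉ bigSets I X → A \ B ∈ I (X \ B)

def MediumPlusTrans {U : Type*} (I : Set U → Set (Set U)) : Prop :=
  ∀ A X Y : Set U, A ∈ mediumPlusSets I X → X ∈ mediumPlusSets I Y → A ∈ mediumPlusSets I Y

section

variable {U : Type*} {I : Set U → Set (Set U)}

theorem sdiff_mem_bigSets_iff_s2 {X Y : Set U} (hXY : X ⊆ Y) :
    Y \ X ∈ bigSets I Y ↔ X ∈ I Y := by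
  simp only [bigSets, Set.mem_ofPred_eq, Set.sdiff_sdiff_cancel_left hXY, Set.sdiff_subset,
    true_and]

theorem MediumPlusTrans.of_rDownDown (h : RDownDown I) : MediumPlusTrans I := by
  rintro A X Y ⟨hAX, hA⟩ ⟨hXY, hX⟩
  refine ⟨hAX.trans hXY, fun hAY => hA ?_⟩
  -- Cutting away `Y \ X`, which is not big in `Y`, shrinks `Y` to `X` and leaves `A` intact.
  have hcut := h Y A (Y \ X) hAY Set.sdiff_subset (mt (sdiff_mem_bigSets_iff_s2 hXY).1 hX)
  rwa [Set.sdiff_sdiff_cancel_left hXY,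
    (disjoint_sdiff_self_right.mono_left hAX).sdiff_eq_left] at hcut

theorem RDownDown.of_mediumPlusTrans (hI : ∀ X A, A ∈ I X → A ⊆ X)
    (hdown : ∀ X A B : Set U, A ⊆ B → B ⊆ X → B ∈ I X → A ∈ I X)
    (h : MediumPlusTrans I) : RDownDown I := by
  intro X A B hA hBX hB
  by_contra hAB
  have hAB_medium : A \ B ∈ mediumPlusSets I (X \ B) :=
    ⟨Set.sdiff_subset_sdiff_left (hI X A hA), hAB⟩
  have hXB_medium : X \ B ∈ mediumPlusSets I X := ⟨Set.sdiff_subset, fun hXB => hB ⟨hBX, hXB⟩⟩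
  exact (h _ _ _ hAB_medium hXB_medium).2 (hdown X _ A Set.sdiff_subset (hI X A hA) hA)

end

/-- Fact "R-down", third version of (R↓↓): if `I` satisfies (I↓) (downward closure
of smallness), then the condition "for all `X ⊆ U`, all `A ∈ I(X)` and all
`B ⊆ X` with `B ∉ F(X)`, `A \ B ∈ I(X \ B)`" is equivalent to transitivity of
medium-or-large size: for all `A, X, Y ⊆ U`, if `A ∈ M⁺(X)` and `X ∈ M⁺(Y)`,
then `A ∈ M⁺(Y)`. -/
theorem rDownDown_iff_mediumPlus_trans {U : Type*} (I : Set U → Set (Set U))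
    (hI : ∀ X A, A ∈ I X → A ⊆ X)
    (hdown : ∀ X A B : Set U, A ⊆ B → B ⊆ X → B ∈ I X → A ∈ I X) :
    (∀ X A B : Set U, A ∈ I X → B ⊆ X → B ∉ bigSets I X → A \ B ∈ I (X \ B)) ↔
    (∀ A X Y : Set U, A ∈ mediumPlusSets I X → X ∈ mediumPlusSets I Y →
      A ∈ mediumPlusSets I Y) :=
  ⟨MediumPlusTrans.of_rDownDown, RDownDown.of_mediumPlusTrans hI hdown⟩
end

section
/- Proposition 'Ref-Class-Mu' (6.1): if the small-set system induced by f satisfies (R↓↓), then f satisfies (μRatM). -/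
/-!
Apply (R↓↓) in `Y` to the small set `Y \ f Y` and the set `B = Y \ X`, which is not big because
`f Y` meets `X`. Removing `B` leaves `X \ f Y` as a small subset of `X`, i.e. disjoint from
`f X`; since `f X ⊆ X`, this says `f X ⊆ f Y`.
-/

/-- `A` is a small subset of `X` (w.r.t. the choice function `f`):
`A ⊆ X` and `A ∩ f(X) = ∅`. -/
def smallOf {U : Type*} (f : Set U → Set U) (A X : Set U) : Prop :=
  A ⊆ X ∧ A ∩ f X = ∅

section

variable {U : Type*} {f : Set U → Set U} {X Y S : Set U}

theorem smallOf_diff_self (f : Set U → Set U) (X : Set U) : smallOf f (X \ f X) X :=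
  ⟨Set.sdiff_subset, Set.sdiff_inter_self⟩

theorem subset_of_smallOf_diff (hfX : f X ⊆ X) (h : smallOf f (X \ S) X) : f X ⊆ S := by
  intro x hx
  by_contra hxS
  have hmem : x ∈ (X \ S) ∩ f X := ⟨⟨hfX hx, hxS⟩, hx⟩
  rw [h.2] at hmem
  exact hmem

theorem not_subset_diff_of_inter_ne_empty (h : X ∩ S ≠ ∅) : ¬ S ⊆ Y \ X := by
  intro hS
  obtain ⟨x, hxX, hxS⟩ := Set.nonempty_iff_ne_empty.mpr h
  exact (hS hxS).2 hxX

end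

/-- Proposition "Ref-Class-Mu" (6.1): if the small-set system induced by `f`
satisfies (R↓↓), then `f` satisfies (μRatM). -/
theorem refClassMu_6_1 {U : Type*} (f : Set U → Set U) (hf : ∀ X, f X ⊆ X)
    (hRdd : ∀ X A B : Set U, smallOf f A X → B ⊆ X → ¬ f X ⊆ B →
      smallOf f (A \ B) (X \ B)) :
    ∀ X Y : Set U, X ⊆ Y → X ∩ f Y ≠ ∅ → f X ⊆ f Y ∩ X := by
  intro X Y hXY hne
  have hsmall := hRdd Y (Y \ f Y) (Y \ X) (smallOf_diff_self f Y) Set.sdiff_subset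
    (not_subset_diff_of_inter_ne_empty hne)
  rw [Set.sdiff_sdiff_comm, Set.sdiff_sdiff_cancel_left hXY] at hsmall
  exact Set.subset_inter (subset_of_smallOf_diff (hf X) hsmall) (hf X)
end
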